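/- arXiv:2212.02294 — 7 statements merged into one kernel-verified Lean document; each statement's English description precedes it below -/
import Mathlib

section
/- Let A ∈ ℝ^{m×n}, b ∈ ℝᵐ, c ∈ ℝⁿ, and W ∈ ℝ^{n×n} symmetric positive semidefinite with AᵀA + W positive definite. For every μ > 0 and v ∈ ℝᵐ there exists a unique pair (d, x) ∈ ℝᵐ × ℝⁿ satisfying √μ·Aᵀ(eᵛ + eᵛ∘d) = Wx + c and √μ·(e^{−v} − e^{−v}∘d) = Ax + b. Moreover d = 𝟏 − (1/√μ)·eᵛ∘(Ax + b), and x is the unique solution of (AᵀQ(v)A + W)x = 2√μ·Aᵀeᵛ − (c + AᵀQ(v)b), where Q(v) is the diagonal matrix with entries e^{2vᵢ}. -/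
open Matrix

/-- Elementwise exponentiation `e^v` of a vector. -/
noncomputable def expV {m : ℕ} (v : Fin m → ℝ) : Fin m → ℝ := fun i => Real.exp (v i)

/-- The log-domain Newton system: `(d, x)` satisfies
`√μ·Aᵀ(eᵛ + eᵛ∘d) = Wx + c` and `√μ·(e^{−v} − e^{−v}∘d) = Ax + b`. -/
noncomputable def IsNewton {m n : ℕ} (A : Matrix (Fin m) (Fin n) ℝ) (b : Fin m → ℝ)
    (c : Fin n → ℝ) (W : Matrix (Fin n) (Fin n) ℝ) (μ : ℝ) (v d : Fin m → ℝ)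
    (x : Fin n → ℝ) : Prop :=
  Real.sqrt μ • (Aᵀ).mulVec (expV v + expV v * d) = W.mulVec x + c ∧
  Real.sqrt μ • (expV (-v) - expV (-v) * d) = A.mulVec x + b

/-- `Q(v)`: the diagonal matrix with entries `e^{2 vᵢ}`. -/
noncomputable def Q {m : ℕ} (v : Fin m → ℝ) : Matrix (Fin m) (Fin m) ℝ :=
  Matrix.diagonal (fun i => Real.exp (2 * v i))

/-! Eliminating `d` through the second equation turns the first one into the linear system
`(AᵀQ(v)A + W)x = 2√μ·Aᵀeᵛ − (c + AᵀQ(v)b)`, because `eᵛ∘eᵛ = e^{2v}` is the diagonal of `Q(v)`.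
Its matrix is positive definite: for `x ≠ 0`, either `Ax ≠ 0` and the `Q(v)`-term is positive,
or `Ax = 0` and `xᵀWx = xᵀ(AᵀA + W)x > 0`. Hence the system, and with it the Newton system,
has exactly one solution. -/

section PosDef

variable {ι κ : Type*} [Fintype ι] [Fintype κ]

lemma dotProduct_transpose_mul_mul_mulVec (A : Matrix ι κ ℝ) (B : Matrix ι ι ℝ) (x : κ → ℝ) :
    x ⬝ᵥ (Aᵀ * B * A) *ᵥ x = (A *ᵥ x) ⬝ᵥ B *ᵥ (A *ᵥ x) := by
  rw [← mulVec_mulVec, ← mulVec_mulVec, dotProduct_mulVec, vecMul_transpose]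

lemma posDef_transpose_mul_mul_add {A : Matrix ι κ ℝ} {B : Matrix ι ι ℝ} {W : Matrix κ κ ℝ}
    (hB : B.PosDef) (hW : W.PosSemidef) (hAW : (Aᵀ * A + W).PosDef) :
    (Aᵀ * B * A + W).PosDef := by
  have hherm : (Aᵀ * B * A).IsHermitian := by
    simpa only [conjTranspose_eq_transpose_of_trivial] using
      isHermitian_conjTranspose_mul_mul A hB.isHermitian
  refine .of_dotProduct_mulVec_pos (hherm.add hW.isHermitian) fun x hx => ?_
  have hWx : 0 ≤ x ⬝ᵥ W *ᵥ x := by simpa using hW.dotProduct_mulVec_nonneg x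
  simp only [star_trivial, add_mulVec, dotProduct_add, dotProduct_transpose_mul_mul_mulVec]
  by_cases hAx : A *ᵥ x = 0
  · have hpos := hAW.dotProduct_mulVec_pos hx
    rw [star_trivial, add_mulVec, dotProduct_add, ← mulVec_mulVec, dotProduct_mulVec,
      vecMul_transpose] at hpos
    simpa [hAx] using hpos
  · have hBAx : 0 < (A *ᵥ x) ⬝ᵥ B *ᵥ (A *ᵥ x) := by
      simpa using hB.dotProduct_mulVec_pos hAx
    linarith

end PosDef

lemma posDef_Q {m : ℕ} (v : Fin m → ℝ) : (Q v).PosDef :=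
  posDef_diagonal_iff.2 fun _ => Real.exp_pos _

section NewtonSystem

variable {m n : ℕ}

lemma smul_expV_neg_sub_iff {s : ℝ} (hs : s ≠ 0) (v d r : Fin m → ℝ) :
    s • (expV (-v) - expV (-v) * d) = r ↔ d = 1 - s⁻¹ • (expV v * r) := by
  simp only [funext_iff, Pi.smul_apply, Pi.sub_apply, Pi.mul_apply, Pi.one_apply, smul_eq_mul,
    expV, Pi.neg_apply, Real.exp_neg]
  refine forall_congr' fun i => ?_
  have he := (Real.exp_pos (v i)).ne'
  constructor <;> intro h
  · rw [← h]; field_simp; ring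
  · rw [h]; field_simp; ring

lemma smul_expV_add_expV_mul_eq {s : ℝ} (hs : s ≠ 0) (v r : Fin m → ℝ) :
    s • (expV v + expV v * (1 - s⁻¹ • (expV v * r))) = (2 * s) • expV v - Q v *ᵥ r := by
  funext i
  simp only [Pi.smul_apply, Pi.add_apply, Pi.mul_apply, Pi.sub_apply, Pi.one_apply,
    smul_eq_mul, expV, mulVec_diagonal, Q]
  rw [two_mul (v i), Real.exp_add]
  field_simp
  ring

lemma isNewton_iff (A : Matrix (Fin m) (Fin n) ℝ) (b : Fin m → ℝ) (c : Fin n → ℝ)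
    (W : Matrix (Fin n) (Fin n) ℝ) {μ : ℝ} (hμ : 0 < μ) (v d : Fin m → ℝ) (x : Fin n → ℝ) :
    IsNewton A b c W μ v d x ↔
      d = 1 - (Real.sqrt μ)⁻¹ • (expV v * (A *ᵥ x + b)) ∧
      (Aᵀ * Q v * A + W) *ᵥ x = (2 * Real.sqrt μ) • Aᵀ *ᵥ expV v - (c + (Aᵀ * Q v) *ᵥ b) := by
  have hs : Real.sqrt μ ≠ 0 := (Real.sqrt_pos.2 hμ).ne'
  rw [IsNewton, smul_expV_neg_sub_iff hs, and_comm]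
  refine and_congr_right fun hd => ?_
  rw [hd, ← mulVec_smul, smul_expV_add_expV_mul_eq hs, mulVec_sub, mulVec_smul, mulVec_mulVec,
    mulVec_add, mulVec_mulVec, add_mulVec]
  constructor <;> intro h <;> linear_combination -h

end NewtonSystem

/-- existence and uniqueness of the Newton direction and point, together
with the explicit formulas `d = 𝟏 − (1/√μ)·eᵛ∘(Ax+b)` and
`(AᵀQ(v)A + W)x = 2√μ·Aᵀeᵛ − (c + AᵀQ(v)b)` (with `x` its unique solution). -/
theorem stmt_1 {m n : ℕ} (A : Matrix (Fin m) (Fin n) ℝ) (b : Fin m → ℝ) (c : Fin n → ℝ)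
    (W : Matrix (Fin n) (Fin n) ℝ) (hW : W.PosSemidef) (hAW : (Aᵀ * A + W).PosDef)
    (μ : ℝ) (hμ : 0 < μ) (v : Fin m → ℝ) :
    (∃! p : (Fin m → ℝ) × (Fin n → ℝ), IsNewton A b c W μ v p.1 p.2) ∧
    ∀ d : Fin m → ℝ, ∀ x : Fin n → ℝ, IsNewton A b c W μ v d x →
      d = 1 - (Real.sqrt μ)⁻¹ • (expV v * (A.mulVec x + b)) ∧
      (Aᵀ * Q v * A + W).mulVec x
        = (2 * Real.sqrt μ) • (Aᵀ).mulVec (expV v) - (c + (Aᵀ * Q v).mulVec b) ∧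
      ∀ x' : Fin n → ℝ,
        (Aᵀ * Q v * A + W).mulVec x'
          = (2 * Real.sqrt μ) • (Aᵀ).mulVec (expV v) - (c + (Aᵀ * Q v).mulVec b) →
        x' = x := by
  have hunit : IsUnit (Aᵀ * Q v * A + W) :=
    (posDef_transpose_mul_mul_add (posDef_Q v) hW hAW).isUnit
  have hinj := mulVec_injective_iff_isUnit.2 hunit
  obtain ⟨x₀, hx₀⟩ := mulVec_surjective_iff_isUnit.2 hunit
    ((2 * Real.sqrt μ) • Aᵀ *ᵥ expV v - (c + (Aᵀ * Q v) *ᵥ b))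
  have hN₀ : IsNewton A b c W μ v (1 - (Real.sqrt μ)⁻¹ • (expV v * (A *ᵥ x₀ + b))) x₀ :=
    (isNewton_iff A b c W hμ v _ _).2 ⟨rfl, hx₀⟩
  refine ⟨⟨(_, x₀), hN₀, ?_⟩, fun d x h => ?_⟩
  · rintro ⟨d, x⟩ h
    obtain ⟨hd, hx⟩ := (isNewton_iff A b c W hμ v d x).1 h
    obtain rfl : x = x₀ := hinj (hx.trans hx₀.symm)
    exact Prod.ext hd rfl
  · obtain ⟨hd, hx⟩ := (isNewton_iff A b c W hμ v d x).1 h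
    exact ⟨hd, hx, fun x' hx' => hinj (hx'.trans hx.symm)⟩
end

section
/- For every vector w ∈ ℝᵐ, setting h₀ := Σᵢ (2·cosh(wᵢ) − 2), it holds that ‖eʷ − e^{−w}‖² ≤ h₀² + 4·h₀, where ‖·‖ is the Euclidean norm and eʷ denotes elementwise exponentiation. -/
/-- for every `w ∈ ℝᵐ`, with `h₀ := Σᵢ (2·cosh(wᵢ) − 2)`, one has
`‖eʷ − e^{−w}‖² ≤ h₀² + 4·h₀` (Euclidean norm, elementwise exponentiation). -/
theorem stmt_10 {m : ℕ} (w : Fin m → ℝ) :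
    ∑ i, (Real.exp (w i) - Real.exp (-w i)) ^ 2
      ≤ (∑ i, (2 * Real.cosh (w i) - 2)) ^ 2 + 4 * ∑ i, (2 * Real.cosh (w i) - 2) := by
  have hnn : ∀ i ∈ Finset.univ (α := Fin m), 0 ≤ 2 * Real.cosh (w i) - 2 := by
    intro i _
    have := Real.one_le_cosh (w i)
    linarith
  have key : ∀ i : Fin m, (Real.exp (w i) - Real.exp (-w i)) ^ 2
      = (2 * Real.cosh (w i) - 2) ^ 2 + 4 * (2 * Real.cosh (w i) - 2) := by
    intro i
    have h1 : Real.exp (w i) - Real.exp (-w i) = 2 * Real.sinh (w i) := by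
      rw [Real.sinh_eq]; ring
    have h2 : Real.cosh (w i) ^ 2 - Real.sinh (w i) ^ 2 = 1 := Real.cosh_sq_sub_sinh_sq (w i)
    rw [h1]; nlinarith [h2]
  calc ∑ i, (Real.exp (w i) - Real.exp (-w i)) ^ 2
      = ∑ i, ((2 * Real.cosh (w i) - 2) ^ 2 + 4 * (2 * Real.cosh (w i) - 2)) := by
        exact Finset.sum_congr rfl fun i _ => key i
    _ = (∑ i, (2 * Real.cosh (w i) - 2) ^ 2) + 4 * ∑ i, (2 * Real.cosh (w i) - 2) := by
        rw [Finset.sum_add_distrib, Finset.mul_sum]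
    _ ≤ (∑ i, (2 * Real.cosh (w i) - 2)) ^ 2 + 4 * ∑ i, (2 * Real.cosh (w i) - 2) := by
        gcongr ?_ + _
        exact Finset.sum_sq_le_sq_sum_of_nonneg hnn
end

section
/- For μ > 0 and v ∈ ℝᵐ, let d = d(v,μ) and x = x(v,μ) be the Newton direction and point, and set λ = √μ·(eᵛ + eᵛ∘d) and s = √μ·(e^{−v} − e^{−v}∘d). If ‖d‖∞ ≤ 1, then Ax + b = s, Aᵀλ = Wx + c, λ ≥ 0, and s ≥ 0 (componentwise). Furthermore ‖s∘λ‖₁ = μ·(m − ‖d‖²). -/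
open Matrix

/-- `v` is a centered point for parameter `μ`, witnessed by `x`:
`√μ·Aᵀeᵛ = Wx + c` and `√μ·e^{−v} = Ax + b`. -/
noncomputable def IsCentered {m n : ℕ} (A : Matrix (Fin m) (Fin n) ℝ) (b : Fin m → ℝ)
    (c : Fin n → ℝ) (W : Matrix (Fin n) (Fin n) ℝ) (μ : ℝ) (v : Fin m → ℝ)
    (x : Fin n → ℝ) : Prop :=
  Real.sqrt μ • (Aᵀ).mulVec (expV v) = W.mulVec x + c ∧
  Real.sqrt μ • expV (-v) = A.mulVec x + b

/-- The divergence `h(u,v) := ⟨eᵘ, e^{−v}⟩ + ⟨e^{−u}, eᵛ⟩ − 2m`. -/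
noncomputable def diverg {m : ℕ} (u v : Fin m → ℝ) : ℝ :=
  (∑ i, Real.exp (u i) * Real.exp (-v i)) + (∑ i, Real.exp (-u i) * Real.exp (v i))
    - 2 * m

/-- The Euclidean norm of a vector in `ℝᵐ`. -/
noncomputable def enorm {m : ℕ} (d : Fin m → ℝ) : ℝ := Real.sqrt (∑ i, d i ^ 2)

/-- for `μ > 0` and `v`, let `(d, x)` be the Newton direction and point,
`λ = √μ·(eᵛ + eᵛ∘d)` and `s = √μ·(e^{−v} − e^{−v}∘d)`. If `‖d‖∞ ≤ 1` then
`Ax + b = s`, `Aᵀλ = Wx + c`, `λ ≥ 0`, `s ≥ 0`, and `‖s∘λ‖₁ = μ(m − ‖d‖²)`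
(here `‖d‖` on `Fin m → ℝ` is the sup norm). -/
theorem stmt_15 {m n : ℕ} (A : Matrix (Fin m) (Fin n) ℝ) (b : Fin m → ℝ) (c : Fin n → ℝ)
    (W : Matrix (Fin n) (Fin n) ℝ) (hW : W.PosSemidef) (hAW : (Aᵀ * A + W).PosDef)
    (μ : ℝ) (hμ : 0 < μ) (v d : Fin m → ℝ) (x : Fin n → ℝ)
    (hd : IsNewton A b c W μ v d x)
    (lam s : Fin m → ℝ)
    (hlam : lam = Real.sqrt μ • (expV v + expV v * d))
    (hs : s = Real.sqrt μ • (expV (-v) - expV (-v) * d))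
    (hdle : ‖d‖ ≤ 1) :
    A.mulVec x + b = s ∧
    (Aᵀ).mulVec lam = W.mulVec x + c ∧
    (∀ i, 0 ≤ lam i) ∧ (∀ i, 0 ≤ s i) ∧
    ∑ i, |s i * lam i| = μ * (m - ∑ i, d i ^ 2) := by
  obtain ⟨h1, h2⟩ := hd
  have hdb : ∀ i, |d i| ≤ 1 := fun i => le_trans (norm_le_pi_norm d i) hdle
  refine ⟨by rw [hs, ← h2], by rw [hlam, Matrix.mulVec_smul, h1], ?_, ?_, ?_⟩
  · intro i
    have h1d : -1 ≤ d i := (abs_le.mp (hdb i)).1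
    simp only [hlam, Pi.smul_apply, Pi.add_apply, Pi.mul_apply, expV, smul_eq_mul]
    have h0 : (0:ℝ) ≤ Real.exp (v i) * (1 + d i) :=
      mul_nonneg (Real.exp_pos _).le (by linarith)
    nlinarith [Real.sqrt_nonneg μ]
  · intro i
    have h1d : d i ≤ 1 := (abs_le.mp (hdb i)).2
    simp only [hs, Pi.smul_apply, Pi.sub_apply, Pi.mul_apply, expV, Pi.neg_apply,
      smul_eq_mul]
    have h0 : (0:ℝ) ≤ Real.exp (-v i) * (1 - d i) :=
      mul_nonneg (Real.exp_pos _).le (by linarith)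
    nlinarith [Real.sqrt_nonneg μ]
  · have habs : ∀ i, |s i * lam i| = μ * (1 - d i ^ 2) := by
      intro i
      have hb := abs_le.mp (hdb i)
      have hexp : Real.exp (-v i) * Real.exp (v i) = 1 := by
        rw [← Real.exp_add]; simp
      have hss : Real.sqrt μ * Real.sqrt μ = μ := Real.mul_self_sqrt hμ.le
      have key : s i * lam i = μ * (1 - d i ^ 2) := by
        simp only [hs, hlam, Pi.smul_apply, Pi.sub_apply, Pi.add_apply, Pi.mul_apply,
          expV, Pi.neg_apply, smul_eq_mul]
        calc Real.sqrt μ * (Real.exp (-v i) - Real.exp (-v i) * d i) *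
              (Real.sqrt μ * (Real.exp (v i) + Real.exp (v i) * d i))
            = (Real.sqrt μ * Real.sqrt μ) *
              ((Real.exp (-v i) * Real.exp (v i)) * (1 - d i ^ 2)) := by ring
          _ = μ * (1 - d i ^ 2) := by rw [hss, hexp]; ring
      have hsq : d i ^ 2 ≤ 1 := by nlinarith [hb.1, hb.2]
      rw [key, abs_of_nonneg (mul_nonneg hμ.le (by linarith))]
    calc ∑ i, |s i * lam i| = ∑ i, μ * (1 - d i ^ 2) := by simp [habs]
      _ = μ * ∑ i, (1 - d i ^ 2) := (Finset.mul_sum _ _ _).symm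
      _ = μ * (m - ∑ i, d i ^ 2) := by rw [Finset.sum_sub_distrib]; simp
end

section
/- For μ > 0 and v ∈ ℝᵐ, let d = d(v,μ) and x = x(v,μ) be the Newton direction and point. If ‖d‖∞ ≤ 1, then x is feasible for the QP (Ax + b ≥ 0) and its objective value satisfies (1/2)xᵀWx + cᵀx ≤ V* + μ·m, where V* is the optimal value of the QP: minimize (1/2)xᵀWx + cᵀx subject to Ax + b ≥ 0. -/
open Matrix

/-!
The Newton system exhibits a dual certificate: `λ := √μ·eᵛ∘(1 + d)` satisfies `Aᵀλ = Wx + c`,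
and the slack is `s := Ax + b = √μ·e^{−v}∘(1 − d)`. When `|dᵢ| ≤ 1` both are nonnegative, so
`x` is feasible, and `λᵢ sᵢ = μ(1 − dᵢ²) ≤ μ`. Convexity of the objective `f` then gives the usual
weak-duality estimate `f x − f y ≤ (Wx + c)ᵀ(x − y) = λᵀ(Ax − Ay) ≤ λᵀs ≤ μm` for feasible `y`.
-/

section WeakDuality

variable {ι κ : Type*} [Fintype ι] [Fintype κ]

theorem Matrix.PosSemidef.quadratic_add_dotProduct_sub_le {W : Matrix κ κ ℝ} (hW : W.PosSemidef)
    (c x y : κ → ℝ) :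
    (1 / 2) * (x ⬝ᵥ W *ᵥ x) + c ⬝ᵥ x + (W *ᵥ x + c) ⬝ᵥ (y - x)
      ≤ (1 / 2) * (y ⬝ᵥ W *ᵥ y) + c ⬝ᵥ y := by
  have hsymm : W *ᵥ x ⬝ᵥ y = x ⬝ᵥ W *ᵥ y := by
    rw [dotProduct_comm, dotProduct_mulVec, ← mulVec_transpose,
      show Wᵀ = W from hW.1.eq, dotProduct_comm]
  have hnonneg : 0 ≤ (y - x) ⬝ᵥ W *ᵥ (y - x) := by
    simpa using hW.dotProduct_mulVec_nonneg (y - x)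
  have hexpand : (y - x) ⬝ᵥ W *ᵥ (y - x)
      = y ⬝ᵥ W *ᵥ y - 2 * (x ⬝ᵥ W *ᵥ y) + x ⬝ᵥ W *ᵥ x := by
    rw [mulVec_sub, dotProduct_sub, sub_dotProduct, sub_dotProduct, ← hsymm,
      dotProduct_comm y (W *ᵥ x)]
    ring
  rw [add_dotProduct, dotProduct_sub, dotProduct_sub, hsymm, dotProduct_comm (W *ᵥ x) x]
  linarith

theorem quadratic_le_add_dotProduct_of_dual_feasible {A : Matrix ι κ ℝ} {W : Matrix κ κ ℝ}
    (hW : W.PosSemidef) {b : ι → ℝ} {c x y : κ → ℝ} {lam : ι → ℝ} (hlam : 0 ≤ lam)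
    (hstat : Aᵀ *ᵥ lam = W *ᵥ x + c) (hy : 0 ≤ A *ᵥ y + b) :
    (1 / 2) * (x ⬝ᵥ W *ᵥ x) + c ⬝ᵥ x
      ≤ (1 / 2) * (y ⬝ᵥ W *ᵥ y) + c ⬝ᵥ y + lam ⬝ᵥ (A *ᵥ x + b) := by
  have hgrad : (W *ᵥ x + c) ⬝ᵥ (y - x) = lam ⬝ᵥ (A *ᵥ y + b) - lam ⬝ᵥ (A *ᵥ x + b) := by
    rw [← hstat, mulVec_transpose, ← dotProduct_mulVec, mulVec_sub, dotProduct_sub,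
      dotProduct_add, dotProduct_add]
    ring
  have := hW.quadratic_add_dotProduct_sub_le c x y
  linarith [dotProduct_nonneg_of_nonneg hlam hy]

end WeakDuality

section NewtonCertificate

variable {m : ℕ} (μ : ℝ) (v d : Fin m → ℝ)

theorem sqrt_smul_expV_add_mul_nonneg (hd : ∀ i, -1 ≤ d i) :
    0 ≤ Real.sqrt μ • (expV v + expV v * d) := fun i => by
  have : (Real.sqrt μ • (expV v + expV v * d)) i = Real.sqrt μ * Real.exp (v i) * (1 + d i) := by
    simp only [Pi.smul_apply, Pi.add_apply, Pi.mul_apply, smul_eq_mul, expV]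
    ring
  rw [this]
  exact mul_nonneg (by positivity) (by linarith [hd i])

theorem sqrt_smul_expV_sub_mul_nonneg (hd : ∀ i, d i ≤ 1) :
    0 ≤ Real.sqrt μ • (expV v - expV v * d) := fun i => by
  have : (Real.sqrt μ • (expV v - expV v * d)) i = Real.sqrt μ * Real.exp (v i) * (1 - d i) := by
    simp only [Pi.smul_apply, Pi.sub_apply, Pi.mul_apply, smul_eq_mul, expV]
    ring
  rw [this]
  exact mul_nonneg (by positivity) (sub_nonneg.mpr (hd i))

variable {μ} in
theorem sqrt_smul_expV_dotProduct_le (hμ : 0 ≤ μ) :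
    (Real.sqrt μ • (expV v + expV v * d)) ⬝ᵥ (Real.sqrt μ • (expV (-v) - expV (-v) * d))
      ≤ μ * m := by
  have hterm : ∀ i, (Real.sqrt μ • (expV v + expV v * d)) i
      * (Real.sqrt μ • (expV (-v) - expV (-v) * d)) i = μ * (1 - d i ^ 2) := fun i => by
    simp only [Pi.smul_apply, Pi.add_apply, Pi.sub_apply, Pi.mul_apply, Pi.neg_apply,
      smul_eq_mul, expV]
    have hsqrt := Real.mul_self_sqrt hμ
    have hexp : Real.exp (v i) * Real.exp (-v i) = 1 := by rw [← Real.exp_add]; simp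
    linear_combination
      (1 - d i ^ 2) * (Real.exp (v i) * Real.exp (-v i)) * hsqrt + μ * (1 - d i ^ 2) * hexp
  calc _ = ∑ i, μ * (1 - d i ^ 2) := Finset.sum_congr rfl fun i _ => hterm i
    _ ≤ ∑ _i : Fin m, μ := Finset.sum_le_sum fun i _ => by nlinarith [sq_nonneg (d i)]
    _ = μ * m := by simp [mul_comm]

end NewtonCertificate

theorem stmt_16_general {m n : ℕ} (A : Matrix (Fin m) (Fin n) ℝ) (b : Fin m → ℝ) (c : Fin n → ℝ)
    (W : Matrix (Fin n) (Fin n) ℝ) (hW : W.PosSemidef)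
    (μ : ℝ) (hμ : 0 < μ) (v d : Fin m → ℝ) (x : Fin n → ℝ)
    (hd : IsNewton A b c W μ v d x) (hdle : ‖d‖ ≤ 1) :
    (∀ i, 0 ≤ (A.mulVec x + b) i) ∧
    ∀ y : Fin n → ℝ, (∀ i, 0 ≤ (A.mulVec y + b) i) →
      (1 / 2) * (x ⬝ᵥ W.mulVec x) + c ⬝ᵥ x
        ≤ (1 / 2) * (y ⬝ᵥ W.mulVec y) + c ⬝ᵥ y + μ * m := by
  obtain ⟨hstat, hslack⟩ := hd
  have hdi : ∀ i, |d i| ≤ 1 := fun i => (Real.norm_eq_abs _) ▸ (norm_le_pi_norm d i).trans hdle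
  have hfeas : 0 ≤ A *ᵥ x + b :=
    hslack ▸ sqrt_smul_expV_sub_mul_nonneg μ (-v) d fun i => (abs_le.mp (hdi i)).2
  refine ⟨hfeas, fun y hy => ?_⟩
  have hlam := sqrt_smul_expV_add_mul_nonneg μ v d fun i => (abs_le.mp (hdi i)).1
  rw [← mulVec_smul] at hstat
  calc _ ≤ _ := quadratic_le_add_dotProduct_of_dual_feasible hW hlam hstat hy
    _ ≤ _ := by
      rw [← hslack]
      gcongr
      exact sqrt_smul_expV_dotProduct_le v d hμ.le

/-- for `μ > 0` and `v`, let `(d, x)` be the Newton direction and point.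
If `‖d‖∞ ≤ 1` then `x` is feasible (`Ax + b ≥ 0`) and its objective value is within
`μ·m` of the optimal value of the QP `minimize (1/2)xᵀWx + cᵀx s.t. Ax + b ≥ 0`,
i.e. `(1/2)xᵀWx + cᵀx ≤ (1/2)yᵀWy + cᵀy + μ·m` for every feasible `y`
(here `‖d‖` on `Fin m → ℝ` is the sup norm). -/
theorem stmt_16 {m n : ℕ} (A : Matrix (Fin m) (Fin n) ℝ) (b : Fin m → ℝ) (c : Fin n → ℝ)
    (W : Matrix (Fin n) (Fin n) ℝ) (hW : W.PosSemidef) (hAW : (Aᵀ * A + W).PosDef)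
    (μ : ℝ) (hμ : 0 < μ) (v d : Fin m → ℝ) (x : Fin n → ℝ)
    (hd : IsNewton A b c W μ v d x) (hdle : ‖d‖ ≤ 1) :
    (∀ i, 0 ≤ (A.mulVec x + b) i) ∧
    ∀ y : Fin n → ℝ, (∀ i, 0 ≤ (A.mulVec y + b) i) →
      (1 / 2) * (x ⬝ᵥ W.mulVec x) + c ⬝ᵥ x
        ≤ (1 / 2) * (y ⬝ᵥ W.mulVec y) + c ⬝ᵥ y + μ * m :=
  stmt_16_general A b c W hW μ hμ v d x hd hdle
end

section
/- Fix v ∈ ℝᵐ. There exist d₀, d₁ ∈ ℝᵐ such that for all μ > 0, the Newton direction satisfies d(v,μ) = d₀ + (1/√μ)·d₁. -/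
/-!
The second Newton equation gives `d = 1 - μ^{-1/2} eᵛ ∘ (Ax + b)`. Substituting this into the first
one leaves the linear system `(Aᵀ diag(e^{2v}) A + W) x = √μ · 2Aᵀeᵛ - Aᵀ(e^{2v} ∘ b) - c`, whose
matrix does not depend on `μ` and is positive definite because `AᵀA + W` is. Hence `x` is affine
in `√μ`, and then `d` is affine in `1/√μ`.
-/

open Matrix

namespace Matrix

variable {m n R : Type*} [Fintype m] [Fintype n]
  [Ring R] [PartialOrder R] [StarRing R] [IsOrderedCancelAddMonoid R]

/-- On `ker B` the form of `Bᴴ * D * B + W` agrees with that of `Bᴴ * B + W`; off it, the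
`D`-part alone is positive. -/
theorem PosDef.conjTranspose_mul_mul_same_add {B : Matrix m n R} {D : Matrix m m R}
    {W : Matrix n n R} (hD : D.PosDef) (hW : W.PosSemidef) (hBW : (Bᴴ * B + W).PosDef) :
    (Bᴴ * D * B + W).PosDef := by
  classical
  have form (M : Matrix m m R) (x : n → R) :
      star x ⬝ᵥ ((Bᴴ * M * B + W) *ᵥ x)
        = star (B *ᵥ x) ⬝ᵥ (M *ᵥ (B *ᵥ x)) + star x ⬝ᵥ (W *ᵥ x) := by
    simp only [add_mulVec, dotProduct_add, star_mulVec, dotProduct_mulVec, vecMul_vecMul]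
  refine .of_dotProduct_mulVec_pos ((isHermitian_conjTranspose_mul_mul B hD.1).add hW.1)
    fun x hx => ?_
  rw [form]
  by_cases hBx : B *ᵥ x = 0
  · have := hBW.dotProduct_mulVec_pos hx
    rw [← Matrix.mul_one Bᴴ, form, hBx] at this
    simpa [hBx] using this
  · exact add_pos_of_pos_of_nonneg (hD.dotProduct_mulVec_pos hBx) (hW.dotProduct_mulVec_nonneg x)

end Matrix

section Newton

variable {m n : ℕ} {A : Matrix (Fin m) (Fin n) ℝ} {b : Fin m → ℝ} {c : Fin n → ℝ}
  {W : Matrix (Fin n) (Fin n) ℝ} {μ : ℝ} {v d : Fin m → ℝ} {x : Fin n → ℝ}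

theorem expV_neg_mul_expV (v : Fin m → ℝ) : expV (-v) * expV v = 1 := by
  ext i
  simp [expV, ← Real.exp_add]

theorem IsNewton.eq_one_sub (h : IsNewton A b c W μ v d x) (hμ : 0 < μ) :
    d = 1 - (√μ)⁻¹ • (expV v * (A *ᵥ x + b)) := by
  have hs : √μ ≠ 0 := (Real.sqrt_pos.mpr hμ).ne'
  have h1d : √μ • (1 - d) = expV v * (A *ᵥ x + b) := by
    rw [← h.2, mul_smul_comm, mul_sub, ← mul_assoc, mul_comm (expV v), expV_neg_mul_expV,
      one_mul]
  rw [← h1d, smul_smul, inv_mul_cancel₀ hs, one_smul, sub_sub_cancel]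

theorem IsNewton.mulVec_eq (h : IsNewton A b c W μ v d x) (hμ : 0 < μ) :
    (Aᵀ * diagonal (expV v * expV v) * A + W) *ᵥ x
      = √μ • (2 • Aᵀ *ᵥ expV v) - (Aᵀ *ᵥ (expV v * expV v * b) + c) := by
  have hs : √μ ≠ 0 := (Real.sqrt_pos.mpr hμ).ne'
  have hsum : expV v + expV v * d
      = 2 • expV v - (√μ)⁻¹ • (expV v * expV v * (A *ᵥ x + b)) := by
    rw [h.eq_one_sub hμ]
    ext i
    simp only [Pi.add_apply, Pi.mul_apply, Pi.sub_apply, Pi.smul_apply, Pi.one_apply, smul_eq_mul]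
    ring
  have hWx : W *ᵥ x + c
      = √μ • (2 • Aᵀ *ᵥ expV v) - Aᵀ *ᵥ (expV v * expV v * (A *ᵥ x + b)) := by
    rw [← h.1, hsum, mulVec_sub, mulVec_smul, mulVec_smul, smul_sub, smul_smul,
      mul_inv_cancel₀ hs, one_smul]
  have hdiag : diagonal (expV v * expV v) *ᵥ (A *ᵥ x) = expV v * expV v * (A *ᵥ x) := by
    ext i
    exact mulVec_diagonal _ _ i
  rw [eq_sub_iff_add_eq, ← eq_sub_iff_add_eq.mp hWx, add_mulVec, ← mulVec_mulVec,
    ← mulVec_mulVec, hdiag, mul_add, mulVec_add]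
  abel

end Newton

/-- fix `v ∈ ℝᵐ`. There exist `d₀, d₁ ∈ ℝᵐ` such that for every
`μ > 0` the Newton direction satisfies `d(v,μ) = d₀ + (1/√μ)·d₁`. -/
theorem stmt_17 {m n : ℕ} (A : Matrix (Fin m) (Fin n) ℝ) (b : Fin m → ℝ) (c : Fin n → ℝ)
    (W : Matrix (Fin n) (Fin n) ℝ) (hW : W.PosSemidef) (hAW : (Aᵀ * A + W).PosDef)
    (v : Fin m → ℝ) :
    ∃ d₀ d₁ : Fin m → ℝ, ∀ μ : ℝ, 0 < μ →
      ∀ d : Fin m → ℝ, ∀ x : Fin n → ℝ, IsNewton A b c W μ v d x →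
        d = d₀ + (Real.sqrt μ)⁻¹ • d₁ := by
  set M := Aᵀ * diagonal (expV v * expV v) * A + W
  have hM : M.PosDef := by
    have hD : (diagonal (expV v * expV v)).PosDef :=
      .diagonal fun i => mul_pos (Real.exp_pos _) (Real.exp_pos _)
    have := hD.conjTranspose_mul_mul_same_add hW (B := A)
      (by rwa [conjTranspose_eq_transpose_of_trivial])
    rwa [conjTranspose_eq_transpose_of_trivial] at this
  have hdet : IsUnit M.det := (isUnit_iff_isUnit_det M).mp hM.isUnit
  set x₀ := M⁻¹ *ᵥ (2 • Aᵀ *ᵥ expV v)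
  set x₁ := M⁻¹ *ᵥ (Aᵀ *ᵥ (expV v * expV v * b) + c)
  refine ⟨1 - expV v * A *ᵥ x₀, expV v * (A *ᵥ x₁ - b), fun μ hμ d x h => ?_⟩
  have hx : x = √μ • x₀ - x₁ := by
    rw [← one_mulVec x, ← nonsing_inv_mul M hdet, ← mulVec_mulVec, h.mulVec_eq hμ, mulVec_sub,
      mulVec_smul]
  have hs : √μ ≠ 0 := (Real.sqrt_pos.mpr hμ).ne'
  rw [h.eq_one_sub hμ, hx, mulVec_sub, mulVec_smul]
  ext i
  simp only [Pi.add_apply, Pi.mul_apply, Pi.sub_apply, Pi.smul_apply, Pi.one_apply, smul_eq_mul]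
  field_simp
  ring
end

section
/- Let (x, s, λ) ∈ ℝⁿ × ℝᵐ × ℝᵐ with s > 0 componentwise, and let (Δx, Δs, Δλ) solve the primal barrier Newton system: Aᵀ(λ + Δλ) = W(x + Δx) + c, s + Δs = A(x + Δx) + b, and μ(s⁻¹ − s⁻²∘Δs) = λ + Δλ. Let v ∈ ℝᵐ and μ > 0 satisfy s = √μ·e^{−v}. Then s + Δs = s∘(𝟏 − d(v,μ)), where d(v,μ) is the log-domain Newton direction. -/
open Matrix

/-!
With `s = √μ·e^{−v}`, the vector `d₀ = −s⁻¹∘Δs` together with `x + Δx` solves the log-domain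
Newton system. That system determines its direction uniquely: for the difference `(δ, y)` of two
solutions, `μ‖δ‖² = −yᵀWy ≤ 0` since `e^{v}∘e^{−v} = 𝟏`. Hence `d = d₀`, and
`s∘(𝟏 − d₀) = s + Δs`.
-/

theorem dotProduct_nonpos_of_transpose_mulVec_eq {ι κ : Type*} [Fintype ι] [Fintype κ]
    {A : Matrix ι κ ℝ} {W : Matrix κ κ ℝ} (hW : W.PosSemidef) {u w : ι → ℝ} {y : κ → ℝ}
    (hu : Aᵀ *ᵥ u = W *ᵥ y) (hw : A *ᵥ y = -w) : u ⬝ᵥ w ≤ 0 := by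
  have h := hW.dotProduct_mulVec_nonneg y
  rw [star_trivial, ← hu, dotProduct_mulVec, vecMul_transpose, hw, neg_dotProduct,
    dotProduct_comm] at h
  linarith

theorem expV_mul_expV_neg {m : ℕ} (v : Fin m → ℝ) : expV v * expV (-v) = 1 := by
  funext i
  simp [expV, ← Real.exp_add]

theorem mul_dotProduct_mul_expV_neg {m : ℕ} (v δ : Fin m → ℝ) :
    (expV v * δ) ⬝ᵥ (expV (-v) * δ) = δ ⬝ᵥ δ := by
  simp only [dotProduct, Pi.mul_apply]
  refine Finset.sum_congr rfl fun i _ => ?_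
  have h := congrFun (expV_mul_expV_neg v) i
  simp only [Pi.mul_apply, Pi.one_apply] at h
  linear_combination δ i * δ i * h

theorem IsNewton.dir_eq {m n : ℕ} {A : Matrix (Fin m) (Fin n) ℝ} {b : Fin m → ℝ}
    {c : Fin n → ℝ} {W : Matrix (Fin n) (Fin n) ℝ} (hW : W.PosSemidef) {μ : ℝ} (hμ : 0 < μ)
    {v d₁ d₂ : Fin m → ℝ} {x₁ x₂ : Fin n → ℝ}
    (H₁ : IsNewton A b c W μ v d₁ x₁) (H₂ : IsNewton A b c W μ v d₂ x₂) : d₁ = d₂ := by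
  have hu : Aᵀ *ᵥ (Real.sqrt μ • (expV v * (d₁ - d₂))) = W *ᵥ (x₁ - x₂) := by
    rw [mulVec_smul, mulVec_sub W, ← add_sub_add_right_eq_sub _ _ c, ← H₁.1, ← H₂.1,
      ← smul_sub, ← mulVec_sub]
    ring_nf
  have hw : A *ᵥ (x₁ - x₂) = -(Real.sqrt μ • (expV (-v) * (d₁ - d₂))) := by
    rw [mulVec_sub, ← add_sub_add_right_eq_sub _ _ b, ← H₁.2, ← H₂.2, ← smul_sub, ← smul_neg]
    ring_nf
  have hpair : (Real.sqrt μ • (expV v * (d₁ - d₂))) ⬝ᵥ (Real.sqrt μ • (expV (-v) * (d₁ - d₂)))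
      = μ * ((d₁ - d₂) ⬝ᵥ (d₁ - d₂)) := by
    rw [smul_dotProduct, dotProduct_smul, smul_smul, smul_eq_mul, Real.mul_self_sqrt hμ.le,
      mul_dotProduct_mul_expV_neg]
  have hle := dotProduct_nonpos_of_transpose_mulVec_eq hW hu hw
  rw [hpair] at hle
  have h0 : (d₁ - d₂) ⬝ᵥ (d₁ - d₂) = 0 :=
    le_antisymm (nonpos_of_mul_nonpos_right hle hμ)
      (by simpa using dotProduct_self_star_nonneg (d₁ - d₂))
  exact sub_eq_zero.1 (dotProduct_self_eq_zero.1 h0)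

theorem isNewton_of_primal_newton {m n : ℕ} {A : Matrix (Fin m) (Fin n) ℝ} {b : Fin m → ℝ}
    {c : Fin n → ℝ} {W : Matrix (Fin n) (Fin n) ℝ} {μ : ℝ} (hμ : 0 < μ)
    {v s Δs lam Δlam : Fin m → ℝ} {x Δx : Fin n → ℝ} (hv : s = Real.sqrt μ • expV (-v))
    (h1 : Aᵀ *ᵥ (lam + Δlam) = W *ᵥ (x + Δx) + c)
    (h2 : s + Δs = A *ᵥ (x + Δx) + b)
    (h3 : μ • (s⁻¹ - s⁻¹ * s⁻¹ * Δs) = lam + Δlam) :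
    IsNewton A b c W μ v (-(s⁻¹ * Δs)) (x + Δx) := by
  subst hv
  constructor
  · rw [← h1, ← h3, ← mulVec_smul]
    congr 1
    funext i
    simp only [expV, Pi.smul_apply, Pi.add_apply, Pi.sub_apply, Pi.mul_apply, Pi.neg_apply,
      Pi.inv_apply, smul_eq_mul, Real.exp_neg]
    field_simp
    rw [Real.sq_sqrt hμ.le]
    ring
  · rw [← h2]
    funext i
    simp only [expV, Pi.smul_apply, Pi.add_apply, Pi.sub_apply, Pi.mul_apply, Pi.neg_apply,
      Pi.inv_apply, smul_eq_mul]
    field_simp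
    ring

theorem stmt_18_general {m n : ℕ} (A : Matrix (Fin m) (Fin n) ℝ) (b : Fin m → ℝ) (c : Fin n → ℝ)
    (W : Matrix (Fin n) (Fin n) ℝ) (hW : W.PosSemidef)
    (x : Fin n → ℝ) (s lam : Fin m → ℝ)
    (Δx : Fin n → ℝ) (Δs Δlam : Fin m → ℝ) (μ : ℝ) (hμ : 0 < μ)
    (h1 : (Aᵀ).mulVec (lam + Δlam) = W.mulVec (x + Δx) + c)
    (h2 : s + Δs = A.mulVec (x + Δx) + b)
    (h3 : μ • (s⁻¹ - s⁻¹ * s⁻¹ * Δs) = lam + Δlam)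
    (v : Fin m → ℝ) (hv : s = Real.sqrt μ • expV (-v)) :
    ∀ d : Fin m → ℝ, ∀ x' : Fin n → ℝ, IsNewton A b c W μ v d x' →
      s + Δs = s * (1 - d) := by
  intro d x' hN
  have hs : ∀ i, s i ≠ 0 := fun i => by
    rw [hv]
    exact mul_ne_zero (Real.sqrt_pos.2 hμ).ne' (Real.exp_pos _).ne'
  rw [hN.dir_eq hW hμ (isNewton_of_primal_newton hμ hv h1 h2 h3)]
  funext i
  simp only [Pi.add_apply, Pi.mul_apply, Pi.one_apply, Pi.inv_apply,
    sub_neg_eq_add, mul_add, mul_one, mul_inv_cancel_left₀ (hs i)]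

/-- let `(x, s, λ)` with `s > 0` and let `(Δx, Δs, Δλ)` solve the primal
barrier Newton system `Aᵀ(λ+Δλ) = W(x+Δx) + c`, `s + Δs = A(x+Δx) + b`,
`μ(s⁻¹ − s⁻²∘Δs) = λ + Δλ`. If `s = √μ·e^{−v}` with `μ > 0`, then
`s + Δs = s∘(𝟏 − d(v,μ))`, where `d(v,μ)` is the log-domain Newton direction. -/
theorem stmt_18 {m n : ℕ} (A : Matrix (Fin m) (Fin n) ℝ) (b : Fin m → ℝ) (c : Fin n → ℝ)
    (W : Matrix (Fin n) (Fin n) ℝ) (hW : W.PosSemidef) (hAW : (Aᵀ * A + W).PosDef)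
    (x : Fin n → ℝ) (s lam : Fin m → ℝ) (hs : ∀ i, 0 < s i)
    (Δx : Fin n → ℝ) (Δs Δlam : Fin m → ℝ) (μ : ℝ) (hμ : 0 < μ)
    (h1 : (Aᵀ).mulVec (lam + Δlam) = W.mulVec (x + Δx) + c)
    (h2 : s + Δs = A.mulVec (x + Δx) + b)
    (h3 : μ • (s⁻¹ - s⁻¹ * s⁻¹ * Δs) = lam + Δlam)
    (v : Fin m → ℝ) (hv : s = Real.sqrt μ • expV (-v)) :
    ∀ d : Fin m → ℝ, ∀ x' : Fin n → ℝ, IsNewton A b c W μ v d x' →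
      s + Δs = s * (1 - d) :=
  stmt_18_general A b c W hW x s lam Δx Δs Δlam μ hμ h1 h2 h3 v hv
end

section
/- Let (γ, u, λ) ∈ ℝⁿ × ℝⁿ × ℝᵐ with λ > 0 componentwise, and let (Δγ, Δu, Δλ) solve the dual barrier Newton system: W(u + Δu) = W(γ + Δγ), Aᵀ(λ + Δλ) = W(u + Δu) + c, and A(γ + Δγ) + b = μ(λ⁻¹ − λ⁻²∘Δλ). Let v ∈ ℝᵐ and μ > 0 satisfy λ = √μ·eᵛ. Then λ + Δλ = λ∘(𝟏 + d(v,μ)), where d(v,μ) is the log-domain Newton direction. -/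
open Matrix

section NewtonUniqueness

variable {m n : ℕ} {A : Matrix (Fin m) (Fin n) ℝ} {W : Matrix (Fin n) (Fin n) ℝ}

/-- `yᵀWy = -s² Σ pᵢqᵢeᵢ²` is both nonnegative and nonpositive. -/
theorem eq_zero_of_mulVec_eq_of_posSemidef (hW : W.PosSemidef) {s : ℝ} (hs : s ≠ 0)
    {p q e : Fin m → ℝ} (hpq : ∀ i, 0 < p i * q i) {y : Fin n → ℝ}
    (h₁ : s • Aᵀ *ᵥ (p * e) = W *ᵥ y) (h₂ : A *ᵥ y = -(s • (q * e))) : e = 0 := by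
  have hquad : y ⬝ᵥ W *ᵥ y = -(s ^ 2 * ∑ i, p i * q i * e i ^ 2) := by
    rw [← h₁, dotProduct_smul, dotProduct_mulVec, vecMul_transpose, h₂]
    simp only [dotProduct, Pi.mul_apply, Pi.neg_apply, Pi.smul_apply, smul_eq_mul,
      Finset.mul_sum, ← Finset.sum_neg_distrib]
    exact Finset.sum_congr rfl fun i _ => by ring
  have hterm_nonneg : ∀ i ∈ Finset.univ, 0 ≤ p i * q i * e i ^ 2 :=
    fun i _ => mul_nonneg (hpq i).le (sq_nonneg _)
  have hsum : ∑ i, p i * q i * e i ^ 2 = 0 := by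
    have hWy := hW.dotProduct_mulVec_nonneg y
    rw [star_trivial, hquad] at hWy
    have := Finset.sum_nonneg hterm_nonneg
    have : 0 < s ^ 2 := by positivity
    nlinarith
  funext i
  have hi := (Finset.sum_eq_zero_iff_of_nonneg hterm_nonneg).mp hsum i (Finset.mem_univ i)
  simpa [(hpq i).ne'] using hi

/-- Two solutions of the log-domain Newton system differ by a solution of the homogeneous
system, with weights `eᵛ` and `e⁻ᵛ` whose product is `1`. -/
theorem IsNewton.direction_unique {b : Fin m → ℝ} {c : Fin n → ℝ} (hW : W.PosSemidef)
    {μ : ℝ} (hμ : 0 < μ) {v d d' : Fin m → ℝ} {x x' : Fin n → ℝ}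
    (h : IsNewton A b c W μ v d x) (h' : IsNewton A b c W μ v d' x') : d = d' := by
  obtain ⟨ha, hb⟩ := h
  obtain ⟨ha', hb'⟩ := h'
  have hexp : ∀ i, 0 < expV v i * expV (-v) i := fun i => by
    simp [expV, ← Real.exp_add]
  refine sub_eq_zero.mp (eq_zero_of_mulVec_eq_of_posSemidef (A := A) hW
    (Real.sqrt_pos.mpr hμ).ne' hexp (y := x - x') ?_ ?_)
  · rw [mulVec_sub, ← add_sub_add_right_eq_sub _ _ c, ← ha, ← ha', ← smul_sub, ← mulVec_sub,
      mul_sub]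
    congr 2
    abel
  · rw [mulVec_sub, ← add_sub_add_right_eq_sub _ _ b, ← hb, ← hb', ← smul_sub, ← smul_neg,
      mul_sub]
    congr 1
    abel

end NewtonUniqueness

theorem isNewton_inv_mul_of_dual_newton {m n : ℕ} {A : Matrix (Fin m) (Fin n) ℝ}
    {b : Fin m → ℝ} {c : Fin n → ℝ} {W : Matrix (Fin n) (Fin n) ℝ} {μ : ℝ} (hμ : 0 < μ)
    {v lam Δlam : Fin m → ℝ} {x : Fin n → ℝ} (hv : lam = Real.sqrt μ • expV v)
    (h₁ : Aᵀ *ᵥ (lam + Δlam) = W *ᵥ x + c)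
    (h₂ : A *ᵥ x + b = μ • (lam⁻¹ - lam⁻¹ * lam⁻¹ * Δlam)) :
    IsNewton A b c W μ v (lam⁻¹ * Δlam) x := by
  have hs : Real.sqrt μ ≠ 0 := (Real.sqrt_pos.mpr hμ).ne'
  subst hv
  constructor
  · rw [← h₁, ← mulVec_smul]
    congr 1
    funext i
    have := Real.exp_pos (v i)
    simp only [expV, Pi.smul_apply, Pi.add_apply, Pi.mul_apply, Pi.inv_apply, smul_eq_mul]
    field_simp
  · rw [h₂]
    funext i
    have := Real.exp_pos (v i)
    simp only [expV, Pi.smul_apply, Pi.sub_apply, Pi.mul_apply, Pi.inv_apply, Pi.neg_apply,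
      smul_eq_mul, Real.exp_neg]
    field_simp
    rw [Real.sq_sqrt hμ.le]
    ring

theorem stmt_19_general {m n : ℕ} (A : Matrix (Fin m) (Fin n) ℝ) (b : Fin m → ℝ) (c : Fin n → ℝ)
    (W : Matrix (Fin n) (Fin n) ℝ) (hW : W.PosSemidef)
    (γ u : Fin n → ℝ) (lam : Fin m → ℝ) (hlam : ∀ i, 0 < lam i)
    (Δγ Δu : Fin n → ℝ) (Δlam : Fin m → ℝ) (μ : ℝ) (hμ : 0 < μ)
    (h1 : W.mulVec (u + Δu) = W.mulVec (γ + Δγ))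
    (h2 : (Aᵀ).mulVec (lam + Δlam) = W.mulVec (u + Δu) + c)
    (h3 : A.mulVec (γ + Δγ) + b = μ • (lam⁻¹ - lam⁻¹ * lam⁻¹ * Δlam))
    (v : Fin m → ℝ) (hv : lam = Real.sqrt μ • expV v) :
    ∀ d : Fin m → ℝ, ∀ x' : Fin n → ℝ, IsNewton A b c W μ v d x' →
      lam + Δlam = lam * (1 + d) := by
  intro d x' hd
  have hdual := isNewton_inv_mul_of_dual_newton hμ hv (h1 ▸ h2) h3
  rw [hd.direction_unique hW hμ hdual]
  funext i
  have := (hlam i).ne'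
  simp only [Pi.add_apply, Pi.mul_apply, Pi.one_apply, Pi.inv_apply]
  field_simp

/-- let `(γ, u, λ)` with `λ > 0` and let `(Δγ, Δu, Δλ)` solve the dual
barrier Newton system `W(u+Δu) = W(γ+Δγ)`, `Aᵀ(λ+Δλ) = W(u+Δu) + c`,
`A(γ+Δγ) + b = μ(λ⁻¹ − λ⁻²∘Δλ)`. If `λ = √μ·eᵛ` with `μ > 0`, then
`λ + Δλ = λ∘(𝟏 + d(v,μ))`, where `d(v,μ)` is the log-domain Newton direction. -/
theorem stmt_19 {m n : ℕ} (A : Matrix (Fin m) (Fin n) ℝ) (b : Fin m → ℝ) (c : Fin n → ℝ)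
    (W : Matrix (Fin n) (Fin n) ℝ) (hW : W.PosSemidef) (hAW : (Aᵀ * A + W).PosDef)
    (γ u : Fin n → ℝ) (lam : Fin m → ℝ) (hlam : ∀ i, 0 < lam i)
    (Δγ Δu : Fin n → ℝ) (Δlam : Fin m → ℝ) (μ : ℝ) (hμ : 0 < μ)
    (h1 : W.mulVec (u + Δu) = W.mulVec (γ + Δγ))
    (h2 : (Aᵀ).mulVec (lam + Δlam) = W.mulVec (u + Δu) + c)
    (h3 : A.mulVec (γ + Δγ) + b = μ • (lam⁻¹ - lam⁻¹ * lam⁻¹ * Δlam))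
    (v : Fin m → ℝ) (hv : lam = Real.sqrt μ • expV v) :
    ∀ d : Fin m → ℝ, ∀ x' : Fin n → ℝ, IsNewton A b c W μ v d x' →
      lam + Δlam = lam * (1 + d) :=
  stmt_19_general A b c W hW γ u lam hlam Δγ Δu Δlam μ hμ h1 h2 h3 v hv
end
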